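/- Let m ≥ 1, λ > 0, let b : ℝ^m → ℂ be bounded and measurable, c : ℝ^m → ℂ continuous with compact support, and f : ℝ^m → ℂ Schwartz. Then for every y ∈ ℝ^m one has the kernel representation T_λ*(b(x)·c(ξ)·T_λ f)(y) = C_m² λ^{3m/2} ∫_{ℝ^m} B_λ(y, y′) ĉ(λ(y − y′)) f(y′) dy′, where B_λ(y, y′) = ∫_{ℝ^m} exp(−(λ/2)·((x−y)·(x−y) + (x−y′)·(x−y′))) b(x) dx and ĉ(η) = ∫_{ℝ^m} e^{i ξ·η} c(ξ) dξ. -/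

import Mathlib

/-!
Substituting `T_λ f` into `T_λ*` gives an integral over `((x, ξ), y')` in which the two FBI phases
and the weight `e^{−λ|ξ|²}` combine into the real Gaussian `e^{−(λ/2)(|x−y|² + |x−y'|²)}` times the
oscillation `e^{iλ ξ·(y−y')}`. This integrand is dominated by
`e^{−(λ/2)|x−y|²} ‖b‖_∞ |c(ξ)| |f(y')|`, so Fubini moves the `y'`-integral outside, and for
fixed `y'` the `(x, ξ)`-integral splits into `B_λ(y, y') · ĉ(λ(y − y'))`.
-/

open MeasureTheory

/-- The FBI transform `T_λ f(x,ξ) = C_m λ^{3m/4} ∫ e^{−(λ/2)((x−y)² − 2iξ·(x−y) − ξ²)} f(y) dy`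
with `C_m = 2^{−m/2} π^{−3m/4}`. -/
noncomputable def fbi {m : ℕ} (lam : ℝ) (f : EuclideanSpace ℝ (Fin m) → ℂ)
    (z : EuclideanSpace ℝ (Fin m) × EuclideanSpace ℝ (Fin m)) : ℂ :=
  ((2 : ℝ) ^ (-(m : ℝ) / 2) * Real.pi ^ (-(3 * (m : ℝ)) / 4) * lam ^ (3 * (m : ℝ) / 4)) •
    ∫ y : EuclideanSpace ℝ (Fin m),
      Complex.exp (-((lam : ℂ) / 2) *
        (((inner ℝ (z.1 - y) (z.1 - y) : ℝ) : ℂ)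
          - 2 * Complex.I * ((inner ℝ z.2 (z.1 - y) : ℝ) : ℂ)
          - ((inner ℝ z.2 z.2 : ℝ) : ℂ))) * f y

/-- The adjoint FBI transform with respect to the weight `Φ(x,ξ) = e^{−λ|ξ|²}`. -/
noncomputable def fbiAdj {m : ℕ} (lam : ℝ)
    (F : EuclideanSpace ℝ (Fin m) × EuclideanSpace ℝ (Fin m) → ℂ)
    (y : EuclideanSpace ℝ (Fin m)) : ℂ :=
  ((2 : ℝ) ^ (-(m : ℝ) / 2) * Real.pi ^ (-(3 * (m : ℝ)) / 4) * lam ^ (3 * (m : ℝ) / 4)) •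
    ∫ z : EuclideanSpace ℝ (Fin m) × EuclideanSpace ℝ (Fin m),
      Complex.exp (-((lam : ℂ) / 2) *
        (((inner ℝ (z.1 - y) (z.1 - y) : ℝ) : ℂ)
          + 2 * Complex.I * ((inner ℝ z.2 (z.1 - y) : ℝ) : ℂ)
          - ((inner ℝ z.2 z.2 : ℝ) : ℂ)))
      * ((Real.exp (-lam * ‖z.2‖ ^ 2) : ℝ) : ℂ) * F z

open scoped InnerProductSpace

section InnerProductSpace

variable {V : Type*} [NormedAddCommGroup V] [InnerProductSpace ℝ V]

theorem cexp_fbiAdj_phase_mul_cexp_fbi_phase (lam : ℝ) (x ξ y y' : V) :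
    Complex.exp (-((lam : ℂ) / 2) *
        ((⟪x - y, x - y⟫_ℝ : ℂ) + 2 * Complex.I * (⟪ξ, x - y⟫_ℝ : ℂ) - (⟪ξ, ξ⟫_ℝ : ℂ)))
      * (Real.exp (-lam * ‖ξ‖ ^ 2) : ℂ)
      * Complex.exp (-((lam : ℂ) / 2) *
        ((⟪x - y', x - y'⟫_ℝ : ℂ) - 2 * Complex.I * (⟪ξ, x - y'⟫_ℝ : ℂ) - (⟪ξ, ξ⟫_ℝ : ℂ)))
    = (Real.exp (-(lam / 2) * (⟪x - y, x - y⟫_ℝ + ⟪x - y', x - y'⟫_ℝ)) : ℂ)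
      * Complex.exp (Complex.I * (⟪ξ, lam • (y - y')⟫_ℝ : ℂ)) := by
  have h_diff : (⟪ξ, x - y⟫_ℝ : ℂ) - ⟪ξ, x - y'⟫_ℝ = -⟪ξ, y - y'⟫_ℝ := by
    rw [← Complex.ofReal_sub, ← inner_sub_right, show (x - y) - (x - y') = -(y - y') by abel,
      inner_neg_right, Complex.ofReal_neg]
  have h_smul : ⟪ξ, lam • (y - y')⟫_ℝ = lam * ⟪ξ, y - y'⟫_ℝ := real_inner_smul_right ξ _ lam
  have h_norm : ⟪ξ, ξ⟫_ℝ = ‖ξ‖ ^ 2 := real_inner_self_eq_norm_sq ξ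
  rw [Complex.ofReal_exp, Complex.ofReal_exp, ← Complex.exp_add, ← Complex.exp_add,
    ← Complex.exp_add, h_smul, h_norm]
  congr 1
  push_cast
  linear_combination (-(lam : ℂ) * Complex.I) * h_diff

variable [FiniteDimensional ℝ V] [MeasurableSpace V] [BorelSpace V]

theorem integrable_rexp_neg_mul_sq_norm {a : ℝ} (ha : 0 < a) :
    Integrable (fun v : V => Real.exp (-a * ‖v‖ ^ 2)) := by
  have h := (GaussianFourier.integrable_cexp_neg_mul_sq_norm_add (V := V) (b := (a : ℂ))
    (by simpa using ha) 0 0).re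
  refine h.congr (Filter.Eventually.of_forall fun v => ?_)
  simp only [zero_mul, add_zero]
  rw [RCLike.re_to_complex, ← Complex.ofReal_pow, ← Complex.ofReal_neg, ← Complex.ofReal_mul,
    Complex.exp_ofReal_re]

noncomputable def separatedSymbolIntegrand (lam : ℝ) (b c f : V → ℂ) (y : V) (z : V × V)
    (y' : V) : ℂ :=
  (Real.exp (-(lam / 2) * (⟪z.1 - y, z.1 - y⟫_ℝ + ⟪z.1 - y', z.1 - y'⟫_ℝ)) : ℂ) * b z.1
    * (Complex.exp (Complex.I * (⟪z.2, lam • (y - y')⟫_ℝ : ℂ)) * c z.2) * f y'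

theorem integrable_separatedSymbolIntegrand {lam : ℝ} (hlam : 0 < lam) {b c f : V → ℂ}
    (hb : AEStronglyMeasurable b) {M : ℝ} (hM : ∀ x, ‖b x‖ ≤ M) (hc : Integrable c)
    (hf : Integrable f) (y : V) :
    Integrable (Function.uncurry (separatedSymbolIntegrand lam b c f y)) := by
  have h_dom : Integrable fun w : (V × V) × V =>
      Real.exp (-(lam / 2) * ‖w.1.1 - y‖ ^ 2) * M * ‖c w.1.2‖ * ‖f w.2‖ :=
    ((((integrable_rexp_neg_mul_sq_norm (half_pos hlam)).comp_sub_right y).mul_const M).mul_prod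
      hc.norm).mul_prod hf.norm
  refine h_dom.mono' ?_ (Filter.Eventually.of_forall fun w => ?_)
  · have h_gauss : Continuous fun w : (V × V) × V =>
        (Real.exp (-(lam / 2) * (⟪w.1.1 - y, w.1.1 - y⟫_ℝ + ⟪w.1.1 - w.2, w.1.1 - w.2⟫_ℝ)) : ℂ) :=
      by fun_prop
    have h_phase : Continuous fun w : (V × V) × V =>
        Complex.exp (Complex.I * (⟪w.1.2, lam • (y - w.2)⟫_ℝ : ℂ)) := by fun_prop
    exact ((h_gauss.aestronglyMeasurable.mul hb.comp_fst.comp_fst).mul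
      (h_phase.aestronglyMeasurable.mul hc.1.comp_snd.comp_fst)).mul hf.1.comp_snd
  · obtain ⟨⟨x, ξ⟩, y'⟩ := w
    have h_decay : Real.exp (-(lam / 2) * (⟪x - y, x - y⟫_ℝ + ⟪x - y', x - y'⟫_ℝ))
        ≤ Real.exp (-(lam / 2) * ‖x - y‖ ^ 2) := by
      rw [real_inner_self_eq_norm_sq, real_inner_self_eq_norm_sq, Real.exp_le_exp]
      nlinarith [sq_nonneg ‖x - y'‖]
    simp only [Function.uncurry_apply_pair, separatedSymbolIntegrand, norm_mul,
      Complex.norm_exp_I_mul_ofReal, Complex.norm_real, Real.norm_eq_abs, Real.abs_exp, one_mul]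
    have hM0 : 0 ≤ M := (norm_nonneg _).trans (hM x)
    gcongr
    exact hM x

theorem integral_separatedSymbolIntegrand (lam : ℝ) (b c f : V → ℂ) (y y' : V) :
    ∫ z : V × V, separatedSymbolIntegrand lam b c f y z y'
      = (∫ x : V, (Real.exp (-(lam / 2) * (⟪x - y, x - y⟫_ℝ + ⟪x - y', x - y'⟫_ℝ)) : ℂ) * b x)
        * (∫ ξ : V, Complex.exp (Complex.I * (⟪ξ, lam • (y - y')⟫_ℝ : ℂ)) * c ξ) * f y' := by
  simp only [separatedSymbolIntegrand]
  rw [integral_mul_const]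
  congr 1
  rw [← integral_prod_mul]
  rfl

end InnerProductSpace

theorem fbiAdj_separatedSymbol_mul_fbi {m : ℕ} (lam : ℝ) (b c f : EuclideanSpace ℝ (Fin m) → ℂ)
    (y : EuclideanSpace ℝ (Fin m)) :
    fbiAdj lam (fun z => b z.1 * c z.2 * fbi lam f z) y
      = ((2 : ℝ) ^ (-(m : ℝ) / 2) * Real.pi ^ (-(3 * (m : ℝ)) / 4)
          * lam ^ (3 * (m : ℝ) / 4)) ^ 2 •
        ∫ z, ∫ y', separatedSymbolIntegrand lam b c f y z y' := by
  simp only [fbiAdj, fbi, separatedSymbolIntegrand]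
  set s : ℝ := (2 : ℝ) ^ (-(m : ℝ) / 2) * Real.pi ^ (-(3 * (m : ℝ)) / 4) * lam ^ (3 * (m : ℝ) / 4)
  rw [sq, mul_smul s s]
  congr 1
  rw [← integral_smul]
  congr 1 with z
  rw [mul_smul_comm, mul_smul_comm, ← integral_const_mul, ← integral_const_mul]
  congr 2 with y'
  linear_combination (b z.1 * c z.2 * f y') * cexp_fbiAdj_phase_mul_cexp_fbi_phase lam z.1 z.2 y y'

theorem statement11_general (m : ℕ) (lam : ℝ) (hlam : 0 < lam)
    (b : EuclideanSpace ℝ (Fin m) → ℂ) (hbMeas : Measurable b)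
    (hbBdd : ∃ M : ℝ, ∀ x, ‖b x‖ ≤ M)
    (c : EuclideanSpace ℝ (Fin m) → ℂ) (hc : Continuous c) (hcsupp : HasCompactSupport c)
    (f : SchwartzMap (EuclideanSpace ℝ (Fin m)) ℂ) :
    ∀ y : EuclideanSpace ℝ (Fin m),
      fbiAdj lam (fun z => b z.1 * c z.2 * fbi lam (⇑f) z) y
        = (((2 : ℝ) ^ (-(m : ℝ) / 2) * Real.pi ^ (-(3 * (m : ℝ)) / 4)) ^ 2
            * lam ^ (3 * (m : ℝ) / 2)) •
          ∫ y' : EuclideanSpace ℝ (Fin m),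
            (∫ x : EuclideanSpace ℝ (Fin m),
              ((Real.exp (-(lam / 2) * ((inner ℝ (x - y) (x - y) : ℝ)
                + (inner ℝ (x - y') (x - y') : ℝ))) : ℝ) : ℂ) * b x)
            * (∫ ξ : EuclideanSpace ℝ (Fin m),
                Complex.exp (Complex.I * ((inner ℝ ξ (lam • (y - y')) : ℝ) : ℂ)) * c ξ)
            * f y' := by
  intro y
  obtain ⟨M, hM⟩ := hbBdd
  have h_const : ((2 : ℝ) ^ (-(m : ℝ) / 2) * Real.pi ^ (-(3 * (m : ℝ)) / 4)
      * lam ^ (3 * (m : ℝ) / 4)) ^ 2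
      = ((2 : ℝ) ^ (-(m : ℝ) / 2) * Real.pi ^ (-(3 * (m : ℝ)) / 4)) ^ 2
        * lam ^ (3 * (m : ℝ) / 2) := by
    rw [mul_pow, ← Real.rpow_mul_natCast hlam.le]
    congr 2
    push_cast
    ring
  have h_int := integrable_separatedSymbolIntegrand hlam hbMeas.aestronglyMeasurable hM
    (hc.integrable_of_hasCompactSupport hcsupp) f.integrable y
  rw [fbiAdj_separatedSymbol_mul_fbi, h_const, integral_integral_swap h_int]
  simp_rw [integral_separatedSymbolIntegrand]

/-- kernel representation of `T_λ* (b(x)c(ξ) T_λ f)` for symbols with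
separated variables. -/
theorem statement11 (m : ℕ) (hm : 1 ≤ m) (lam : ℝ) (hlam : 0 < lam)
    (b : EuclideanSpace ℝ (Fin m) → ℂ) (hbMeas : Measurable b)
    (hbBdd : ∃ M : ℝ, ∀ x, ‖b x‖ ≤ M)
    (c : EuclideanSpace ℝ (Fin m) → ℂ) (hc : Continuous c) (hcsupp : HasCompactSupport c)
    (f : SchwartzMap (EuclideanSpace ℝ (Fin m)) ℂ) :
    ∀ y : EuclideanSpace ℝ (Fin m),
      fbiAdj lam (fun z => b z.1 * c z.2 * fbi lam (⇑f) z) y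
        = (((2 : ℝ) ^ (-(m : ℝ) / 2) * Real.pi ^ (-(3 * (m : ℝ)) / 4)) ^ 2
            * lam ^ (3 * (m : ℝ) / 2)) •
          ∫ y' : EuclideanSpace ℝ (Fin m),
            (∫ x : EuclideanSpace ℝ (Fin m),
              ((Real.exp (-(lam / 2) * ((inner ℝ (x - y) (x - y) : ℝ)
                + (inner ℝ (x - y') (x - y') : ℝ))) : ℝ) : ℂ) * b x)
            * (∫ ξ : EuclideanSpace ℝ (Fin m),
                Complex.exp (Complex.I * ((inner ℝ ξ (lam • (y - y')) : ℝ) : ℂ)) * c ξ)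
            * f y' :=
  statement11_general m lam hlam b hbMeas hbBdd c hc hcsupp f
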